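/- Bijection between boundary sequences and bounded-multiplicity partitions: fix n ≥ 2 and i ∈ ℤ/nℤ. The map μ ↦ (H_v(μ_j, μ_{j+1}))_{j≥1} is a bijection from the set of sequences μ = (μ_1, μ_2, …), μ_j ∈ ℤ/nℤ, with μ_j ≡ i + 1 − j (mod n) for all sufficiently large j, onto the set of finitely supported sequences (m_j)_{j≥1} with m_j ∈ {0, 1, …, n−1}. In particular, the multiset of values Σ_{j≥1} j·H_v(μ_j, μ_{j+1}) realizes exactly the partitions N = Σ_{j≥1} j·m_j in which every part j occurs with multiplicity at most n−1. -/
import Mathlib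


noncomputable section

/-- The local CTM energy `H_v(μ,ν)` of the `(ℤ/nℤ)`-symmetric model:
`μ - ν - 1` if `0 ≤ ν < μ ≤ n-1` and `n - 1 + μ - ν` if `0 ≤ μ ≤ ν ≤ n-1`
(on the representatives `0, …, n-1`). -/
def Hv (n : ℕ) (μ ν : ZMod n) : ℕ :=
  if ν.val < μ.val then μ.val - ν.val - 1 else n - 1 + μ.val - ν.val

lemma Hv_lt (n : ℕ) [NeZero n] (μ ν : ZMod n) : Hv n μ ν < n := by
  have h1 := ZMod.val_lt μ
  have h2 := ZMod.val_lt ν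
  unfold Hv
  split <;> omega

lemma Hv_cast (n : ℕ) [NeZero n] (μ ν : ZMod n) :
    ((Hv n μ ν : ℕ) : ZMod n) = μ - ν - 1 := by
  have h1 := ZMod.val_lt μ
  have h2 := ZMod.val_lt ν
  have hμ : ((μ.val : ℕ) : ZMod n) = μ := by
    simp [ZMod.natCast_val, ZMod.cast_id]
  have hν : ((ν.val : ℕ) : ZMod n) = ν := by
    simp [ZMod.natCast_val, ZMod.cast_id]
  have hn0 : ((n : ℕ) : ZMod n) = 0 := ZMod.natCast_self n
  have hpos : 1 ≤ n := Nat.one_le_iff_ne_zero.mpr (NeZero.ne n)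
  unfold Hv
  split_ifs with h
  · have : μ.val - ν.val - 1 = μ.val - (ν.val + 1) := by omega
    rw [this, Nat.cast_sub (by omega)]
    push_cast
    rw [hμ, hν]; ring
  · have : n - 1 + μ.val - ν.val = (n - 1 - ν.val) + μ.val := by omega
    rw [this, Nat.cast_add, Nat.cast_sub (by omega), Nat.cast_sub (by omega)]
    push_cast
    rw [hμ, hν, hn0]; ring

lemma Hv_val (n : ℕ) [NeZero n] (μ ν : ZMod n) : Hv n μ ν = (μ - ν - 1).val := by
  rw [← Hv_cast n μ ν, ZMod.val_natCast_of_lt (Hv_lt n μ ν)]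

/-- Bijection between boundary sequences and bounded-multiplicity partitions: the map
`μ ↦ (H_v(μ_j, μ_{j+1}))_{j≥1}` is a bijection from the set of sequences in `ℤ/nℤ` with
`μ_j ≡ i+1-j (mod n)` for large `j` (written 0-based: `ν_j = μ_{j+1} = i - j` eventually)
onto the finitely supported sequences with values in `{0, 1, …, n-1}`. -/
theorem boundary_sequences_partitions_bijection (n : ℕ) [NeZero n] (hn : 2 ≤ n)
    (i : ZMod n) :
    Set.BijOn (fun (ν : ℕ → ZMod n) => fun j : ℕ => Hv n (ν j) (ν (j + 1)))
      {ν : ℕ → ZMod n | ∃ J : ℕ, ∀ j ≥ J, ν j = i - (j : ZMod n)}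
      {m : ℕ → ℕ | (∀ j, m j ≤ n - 1) ∧ ∃ J : ℕ, ∀ j ≥ J, m j = 0} := by
  constructor
  · -- MapsTo
    rintro ν ⟨J, hJ⟩
    constructor
    · intro j
      show Hv n (ν j) (ν (j + 1)) ≤ n - 1
      have := Hv_lt n (ν j) (ν (j + 1))
      omega
    · refine ⟨J, fun j hj => ?_⟩
      have h1 : ν j = i - (j : ZMod n) := hJ j hj
      have h2 : ν (j + 1) = i - ((j + 1 : ℕ) : ZMod n) := hJ (j+1) (by omega)
      simp only
      rw [Hv_val, h1, h2]
      have : i - (j : ZMod n) - (i - ((j + 1 : ℕ) : ZMod n)) - 1 = 0 := by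
        push_cast; ring
      rw [this, ZMod.val_zero]
  constructor
  · -- InjOn
    rintro ν ⟨J1, hJ1⟩ ν' ⟨J2, hJ2⟩ heq
    have hdiff : ∀ j, ν j - ν (j + 1) = ν' j - ν' (j + 1) := by
      intro j
      have h := congrFun heq j
      simp only [Hv_val] at h
      have := ZMod.val_injective n h
      linear_combination this
    set J := max J1 J2 with hJ
    have htail : ∀ j ≥ J, ν j = ν' j := fun j hj => by
      rw [hJ1 j (le_trans (le_max_left _ _) hj), hJ2 j (le_trans (le_max_right _ _) hj)]
    have key : ∀ d, ν (J - d) = ν' (J - d) := by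
      intro d
      induction d with
      | zero => exact htail J le_rfl
      | succ d ih =>
        by_cases hd : d < J
        · have h1 : J - d = (J - (d + 1)) + 1 := by omega
          have h2 := hdiff (J - (d + 1))
          rw [← h1, ih] at h2
          linear_combination h2
        · have : J - (d + 1) = J - d := by omega
          rw [this]; exact ih
    funext j
    by_cases hj : j ≥ J
    · exact htail j hj
    · have : j = J - (J - j) := by omega
      rw [this]; exact key (J - j)
  · -- SurjOn
    rintro m ⟨hm, J, hJ⟩
    refine ⟨fun j => i - (j : ZMod n) + ((∑ k ∈ Finset.Ico j J, m k : ℕ) : ZMod n), ?_, ?_⟩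
    · refine ⟨J, fun j hj => ?_⟩
      have he : Finset.Ico j J = ∅ := Finset.Ico_eq_empty (by omega)
      simp only [he, Finset.sum_empty, Nat.cast_zero, add_zero]
    · funext j
      simp only [Hv_val]
      have hsum : ((∑ k ∈ Finset.Ico j J, m k : ℕ) : ZMod n)
          - ((∑ k ∈ Finset.Ico (j+1) J, m k : ℕ) : ZMod n) = (m j : ZMod n) := by
        by_cases hjJ : j < J
        · rw [Finset.sum_eq_sum_Ico_succ_bot hjJ]
          push_cast; ring
        · have he1 : Finset.Ico j J = ∅ := Finset.Ico_eq_empty (by omega)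
          have he2 : Finset.Ico (j+1) J = ∅ := Finset.Ico_eq_empty (by omega)
          rw [he1, he2, hJ j (by omega)]
          simp
      have harg : i - (j : ZMod n) + ((∑ k ∈ Finset.Ico j J, m k : ℕ) : ZMod n)
          - (i - ((j+1 : ℕ) : ZMod n) + ((∑ k ∈ Finset.Ico (j+1) J, m k : ℕ) : ZMod n))
          - 1 = (m j : ZMod n) := by
        rw [← hsum]; push_cast; ring
      rw [harg, ZMod.val_natCast_of_lt (by have := hm j; omega)]

end
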